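/- arXiv:1510.05367 — 2 statements merged into one kernel-verified Lean document; each statement's English description precedes it below -/
import Mathlib

section
/- Let T : ℝ → Matrix (n×n, ℝ) be differentiable with T(t) invertible for all t. If T'(t)·T(t)⁻¹ is skew-symmetric for every t and T(τ) ∈ SO(n) for some τ, then T(t) ∈ SO(n) for all t. Conversely, if T(t) ∈ SO(n) for all t, then T'(t)·T(t)⁻¹ is skew-symmetric for all t. -/
open Matrix

/-!
Write `A = T' T⁻¹`. Since `T' = A T`, the derivative of the Gram matrix `Tᵀ T` is
`T'ᵀ T + Tᵀ T' = Tᵀ (Aᵀ + A) T`, which vanishes exactly when `A` is skew-symmetric. So `A` is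
skew-symmetric for all `t` iff `Tᵀ T` is constant, and then `Tᵀ T = 1` everywhere as soon as it
holds at one point. Finally `det T` is continuous with `(det T)² = det (Tᵀ T) = 1`, so on the
connected line it is constantly `1` or constantly `-1`, hence equal to its value `1` at `τ`.
-/

section Algebra

variable {R m : Type*} [CommRing R] [Fintype m] [DecidableEq m]

theorem transpose_mul_add_transpose_mul_eq_zero_iff {T D : Matrix m m R} (hT : IsUnit T) :
    Dᵀ * T + Tᵀ * D = 0 ↔ (D * T⁻¹)ᵀ = -(D * T⁻¹) := by
  have hinv : T⁻¹ * T = 1 := nonsing_inv_mul T ((isUnit_iff_isUnit_det T).mp hT)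
  have hconj : Dᵀ * T + Tᵀ * D = Tᵀ * ((D * T⁻¹)ᵀ + D * T⁻¹) * T := by
    rw [transpose_mul, Matrix.mul_add, Matrix.add_mul, ← Matrix.mul_assoc, ← transpose_mul,
      hinv, transpose_one, Matrix.one_mul, Matrix.mul_assoc, Matrix.mul_assoc, hinv,
      Matrix.mul_one]
  rw [hconj, hT.mul_left_eq_zero, ((isUnit_transpose T).mpr hT).mul_right_eq_zero,
    eq_neg_iff_add_eq_zero]

end Algebra

section Calculus

variable {𝕜 m : Type*} [Fintype m]

theorem hasDerivAt_transpose_mul_self_apply [NontriviallyNormedField 𝕜]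
    {T : 𝕜 → Matrix m m 𝕜} {D : Matrix m m 𝕜} {t : 𝕜}
    (hT : ∀ i j, HasDerivAt (fun s => T s i j) (D i j) t) (i j : m) :
    HasDerivAt (fun s => ((T s)ᵀ * T s) i j) ((Dᵀ * T t + (T t)ᵀ * D) i j) t := by
  simp only [Matrix.add_apply, Matrix.mul_apply, transpose_apply]
  rw [← Finset.sum_add_distrib]
  exact HasDerivAt.fun_sum fun k _ => ((hT k i).mul (hT k j)).congr_deriv (by ring)

theorem transpose_mul_self_const_iff [RCLike 𝕜] {T T' : 𝕜 → Matrix m m 𝕜}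
    (hT : ∀ t i j, HasDerivAt (fun s => T s i j) (T' t i j) t) :
    (∀ s t, (T s)ᵀ * T s = (T t)ᵀ * T t) ↔ ∀ t, (T' t)ᵀ * T t + (T t)ᵀ * T' t = 0 := by
  have hgram t i j := hasDerivAt_transpose_mul_self_apply (hT t) i j
  constructor
  · intro hconst t
    ext i j
    refine (hgram t i j).unique ?_
    simpa only [hconst _ t, Matrix.zero_apply] using hasDerivAt_const t (((T t)ᵀ * T t) i j)
  · intro hzero s t
    ext i j
    have hgram' x : HasDerivAt (fun s => ((T s)ᵀ * T s) i j) 0 x := by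
      simpa only [hzero x, Matrix.zero_apply] using hgram x i j
    exact is_const_of_deriv_eq_zero (fun x => (hgram' x).differentiableAt)
      (fun x => (hgram' x).deriv) s t

end Calculus

theorem det_eq_one_of_transpose_mul_self_eq_one {X R m : Type*} [TopologicalSpace X]
    [PreconnectedSpace X] [CommRing R] [NoZeroDivisors R] [TopologicalSpace R]
    [IsTopologicalRing R] [T1Space R] [Fintype m] [DecidableEq m] {T : X → Matrix m m R}
    (hT : Continuous T) (horth : ∀ x, (T x)ᵀ * T x = 1) {x₀ : X} (hx₀ : (T x₀).det = 1)
    (x : X) : (T x).det = 1 := by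
  have hsq : Set.EqOn ((fun x => (T x).det) ^ 2) 1 Set.univ := fun x _ => by
    simpa [det_mul, sq] using congrArg det (horth x)
  rcases isPreconnected_univ.eq_one_or_eq_neg_one_of_sq_eq hT.matrix_det.continuousOn hsq
    with h | h
  · exact h (Set.mem_univ x)
  · exact (h (Set.mem_univ x)).trans ((h (Set.mem_univ x₀)).symm.trans hx₀)

theorem stmt3 {n : ℕ} (T T' : ℝ → Matrix (Fin n) (Fin n) ℝ)
    (hT' : ∀ t i j, HasDerivAt (fun s => T s i j) (T' t i j) t)
    (hinv : ∀ t, IsUnit (T t)) (τ : ℝ) :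
    (((∀ t, (T' t * (T t)⁻¹)ᵀ = -(T' t * (T t)⁻¹)) ∧ (T τ)ᵀ * T τ = 1 ∧ (T τ).det = 1) →
      ∀ t, (T t)ᵀ * T t = 1 ∧ (T t).det = 1) ∧
    ((∀ t, (T t)ᵀ * T t = 1 ∧ (T t).det = 1) →
      ∀ t, (T' t * (T t)⁻¹)ᵀ = -(T' t * (T t)⁻¹)) := by
  have hskew_iff t := transpose_mul_add_transpose_mul_eq_zero_iff (D := T' t) (hinv t)
  have hgram := transpose_mul_self_const_iff hT'
  have hcont : Continuous T := continuous_matrix fun i j =>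
    continuous_iff_continuousAt.mpr fun t => (hT' t i j).continuousAt
  refine ⟨fun ⟨hskew, hτ, hdet⟩ => ?_, fun horth t => ?_⟩
  · have horth t : (T t)ᵀ * T t = 1 := by
      rw [hgram.mpr (fun s => (hskew_iff s).mpr (hskew s)) t τ, hτ]
    exact fun t => ⟨horth t, det_eq_one_of_transpose_mul_self_eq_one hcont horth hdet t⟩
  · refine (hskew_iff t).mp (hgram.mp (fun s u => ?_) t)
    rw [(horth s).1, (horth u).1]
end

section
/- Let F : ℝ → Matrix (n×n, ℝ) be differentiable with F(t) invertible and F(τ) = I, and let A(t) = Ḟ(t)·F(t)⁻¹ with skew part A⁻(t) = (A(t) − A(t)ᵀ)/2 and symmetric part A⁺(t) = (A(t) + A(t)ᵀ)/2. If O solves Ȯ = A⁻(t)·O with O(τ) = I and M(t) := O(t)ᵀ·F(t), then Ṁ(t) = [O(t)ᵀ·A⁺(t)·O(t)]·M(t) and M(τ) = I; in particular Ṁ·M⁻¹ is symmetric for all t. -/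
/-!
Since `A⁻ = (A - Aᵀ)/2` is skew, `d/dt (OᵀO) = Oᵀ(A⁻ᵀ + A⁻)O = 0`, so `O` stays orthogonal. Then
`Ṁ = (A⁻O)ᵀF + OᵀḞ = Oᵀ(A - A⁻)F = OᵀA⁺F = (OᵀA⁺O)(OᵀF)`, using `Ḟ = AF` and `OOᵀ = 1`; the
factor `OᵀA⁺O` is symmetric because `A⁺` is.
-/

open Matrix

namespace Matrix

variable {l m n : Type*}

theorem hasDerivAt_transpose_mul_apply [Fintype m] {X : ℝ → Matrix m l ℝ}
    {Y : ℝ → Matrix m n ℝ} {X' : Matrix m l ℝ} {Y' : Matrix m n ℝ} {t : ℝ}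
    (hX : ∀ i j, HasDerivAt (fun s => X s i j) (X' i j) t)
    (hY : ∀ i j, HasDerivAt (fun s => Y s i j) (Y' i j) t) (i : l) (j : n) :
    HasDerivAt (fun s => ((X s)ᵀ * Y s) i j) ((X'ᵀ * Y t + (X t)ᵀ * Y') i j) t := by
  simp only [mul_apply, transpose_apply, add_apply, ← Finset.sum_add_distrib]
  exact HasDerivAt.fun_sum fun k _ => (hX k i).mul (hY k j)

theorem transpose_smul_sub_transpose {α : Type*} [CommRing α] (c : α) (A : Matrix n n α) :
    (c • (A - Aᵀ))ᵀ = -(c • (A - Aᵀ)) := by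
  rw [transpose_smul, transpose_sub, transpose_transpose, ← smul_neg, neg_sub]

theorem IsSymm.transpose_mul_mul [Fintype n] {α : Type*} [CommSemiring α] {S : Matrix n n α}
    (hS : S.IsSymm) (O : Matrix n m α) : (Oᵀ * S * O).IsSymm := by
  rw [IsSymm, transpose_mul, transpose_mul, transpose_transpose, hS.eq, Matrix.mul_assoc]

theorem transpose_mul_self_eq_one_of_hasDerivAt_skew [Fintype n] [DecidableEq n]
    {O Ω : ℝ → Matrix n n ℝ} {τ : ℝ}
    (hO : ∀ t i j, HasDerivAt (fun s => O s i j) ((Ω t * O t) i j) t)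
    (hΩ : ∀ t, (Ω t)ᵀ = -Ω t) (hOτ : O τ = 1) (t : ℝ) : (O t)ᵀ * O t = 1 := by
  have hderiv : ∀ s i j, HasDerivAt (fun u => ((O u)ᵀ * O u) i j) 0 s := by
    intro s i j
    have hzero : (Ω s * O s)ᵀ * O s + (O s)ᵀ * (Ω s * O s) = 0 := by
      rw [transpose_mul, hΩ, Matrix.mul_neg, Matrix.neg_mul, Matrix.mul_assoc,
        neg_add_cancel]
    simpa only [hzero, zero_apply] using hasDerivAt_transpose_mul_apply (hO s) (hO s) i j
  ext i j
  rw [is_const_of_deriv_eq_zero (fun s => (hderiv s i j).differentiableAt)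
    (fun s => (hderiv s i j).deriv) t τ, hOτ, transpose_one, Matrix.one_mul]

theorem transpose_mul_add_transpose_mul_eq_conj_symmPart [Fintype n] [DecidableEq n]
    {𝕜 : Type*} [Field 𝕜] [NeZero (2 : 𝕜)] {O F F' A : Matrix n n 𝕜} (hO : O * Oᵀ = 1)
    (hF : A * F = F') :
    ((2:𝕜)⁻¹ • (A - Aᵀ) * O)ᵀ * F + Oᵀ * F'
      = (Oᵀ * ((2:𝕜)⁻¹ • (A + Aᵀ)) * O) * (Oᵀ * F) := by
  have hA : A - (2:𝕜)⁻¹ • (A - Aᵀ) = (2:𝕜)⁻¹ • (A + Aᵀ) := by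
    have h2A : (A - Aᵀ) + (A + Aᵀ) = (2:𝕜) • A := by rw [two_smul]; abel
    rw [sub_eq_iff_eq_add', ← smul_add, h2A, inv_smul_smul₀ two_ne_zero]
  rw [transpose_mul, transpose_smul_sub_transpose, ← hF, Matrix.mul_assoc (Oᵀ * _),
    ← Matrix.mul_assoc O, hO, Matrix.one_mul, Matrix.mul_neg, Matrix.neg_mul,
    ← Matrix.mul_assoc, neg_add_eq_sub, ← Matrix.sub_mul, ← Matrix.mul_sub, hA,
    Matrix.mul_assoc]

end Matrix

theorem stmt8 {n : ℕ} (F F' O O' : ℝ → Matrix (Fin n) (Fin n) ℝ) (τ : ℝ)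
    (hF' : ∀ t i j, HasDerivAt (fun s => F s i j) (F' t i j) t)
    (hFinv : ∀ t, IsUnit (F t)) (hFτ : F τ = 1)
    (hO' : ∀ t i j, HasDerivAt (fun s => O s i j) (O' t i j) t)
    (hOode : ∀ t, O' t
      = ((2:ℝ)⁻¹ • (F' t * (F t)⁻¹ - (F' t * (F t)⁻¹)ᵀ)) * O t)
    (hOτ : O τ = 1) :
    (∀ t i j, HasDerivAt (fun s => ((O s)ᵀ * F s) i j)
      ((((O t)ᵀ * ((2:ℝ)⁻¹ • (F' t * (F t)⁻¹ + (F' t * (F t)⁻¹)ᵀ)) * O t)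
        * ((O t)ᵀ * F t)) i j) t) ∧
    (O τ)ᵀ * F τ = 1 ∧
    (∀ t, ((O t)ᵀ * ((2:ℝ)⁻¹ • (F' t * (F t)⁻¹ + (F' t * (F t)⁻¹)ᵀ)) * O t)ᵀ
        = (O t)ᵀ * ((2:ℝ)⁻¹ • (F' t * (F t)⁻¹ + (F' t * (F t)⁻¹)ᵀ)) * O t) ∧
    (∀ t, (((O t)ᵀ * ((2:ℝ)⁻¹ • (F' t * (F t)⁻¹ + (F' t * (F t)⁻¹)ᵀ)) * O t
        * ((O t)ᵀ * F t)) * ((O t)ᵀ * F t)⁻¹)ᵀ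
      = ((O t)ᵀ * ((2:ℝ)⁻¹ • (F' t * (F t)⁻¹ + (F' t * (F t)⁻¹)ᵀ)) * O t
        * ((O t)ᵀ * F t)) * ((O t)ᵀ * F t)⁻¹) := by
  have hFdet : ∀ t, IsUnit (F t).det := fun t => (isUnit_iff_isUnit_det _).mp (hFinv t)
  have hOrth : ∀ t, (O t)ᵀ * O t = 1 :=
    transpose_mul_self_eq_one_of_hasDerivAt_skew (fun t i j => hOode t ▸ hO' t i j)
      (fun t => transpose_smul_sub_transpose _ _) hOτ
  have hSymm : ∀ t, ((O t)ᵀ * ((2:ℝ)⁻¹ • (F' t * (F t)⁻¹ + (F' t * (F t)⁻¹)ᵀ)) * O t).IsSymm :=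
    fun t => ((isSymm_add_transpose_self _).smul _).transpose_mul_mul _
  refine ⟨fun t i j => ?_, by rw [hOτ, hFτ, transpose_one, Matrix.one_mul], hSymm, fun t => ?_⟩
  · have hM := hasDerivAt_transpose_mul_apply (hO' t) (hF' t) i j
    rwa [hOode t, transpose_mul_add_transpose_mul_eq_conj_symmPart
      (mul_eq_one_comm.mp (hOrth t))
      (nonsing_inv_mul_cancel_right _ _ (hFdet t))] at hM
  · have hMdet : IsUnit ((O t)ᵀ * F t).det := by
      rw [det_mul]
      exact (isUnit_det_of_right_inverse (hOrth t)).mul (hFdet t)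
    rw [mul_nonsing_inv_cancel_right _ _ hMdet]
    exact hSymm t
end
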